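/- arXiv:1508.00875 — 2 statements merged into one kernel-verified Lean document; each statement's English description precedes it below -/
import Mathlib

section
/- For μ ∈ (0, μ₀) with μ₀ = (1/450)(225 − √(3(5227+2368√21))), setting d = √(1−3μ+3μ²), A = (3d−1)/2, D = (225d²−222d+1)/4, one has A > 0 and 0 < D < A², so that ω₁ = √((A−√D)/2) and ω₂ = √((A+√D)/2) are real positive numbers with ω₁ < ω₂. -/
set_option maxHeartbeats 1000000


theorem frequencies_real_positive (μ : ℝ)
    (hμ : 0 < μ) (hμ0 : μ < (1/450) * (225 - Real.sqrt (3*(5227 + 2368*Real.sqrt 21))))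
    (d A D ω₁ ω₂ : ℝ)
    (hd : d = Real.sqrt (1 - 3*μ + 3*μ^2))
    (hA : A = (3*d - 1)/2)
    (hD : D = (225*d^2 - 222*d + 1)/4)
    (hω₁ : ω₁ = Real.sqrt ((A - Real.sqrt D)/2))
    (hω₂ : ω₂ = Real.sqrt ((A + Real.sqrt D)/2)) :
    0 < A ∧ 0 < D ∧ D < A^2 ∧ 0 < ω₁ ∧ 0 < ω₂ ∧ ω₁ < ω₂ := by
  obtain ⟨s, hs⟩ : ∃ s : ℝ, s = 1 - 3*μ + 3*μ^2 := ⟨_, rfl⟩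
  have hs4 : s ≥ 1/4 := by rw [hs]; nlinarith [sq_nonneg (μ - 1/2)]
  have hs0 : (0:ℝ) ≤ s := by linarith
  have hd0 : 0 ≤ d := by rw [hd]; exact Real.sqrt_nonneg _
  have hds : d = Real.sqrt s := by rw [hd, hs]
  have hd2 : d^2 = s := by rw [hd, hs]; exact Real.sq_sqrt (hs ▸ hs0)
  have hdhalf : d ≥ 1/2 := by nlinarith
  have h21nn : (0:ℝ) ≤ Real.sqrt 21 := Real.sqrt_nonneg _
  have h21 : (Real.sqrt 21)^2 = 21 := Real.sq_sqrt (by norm_num)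
  have hR0 : (0:ℝ) ≤ Real.sqrt (3*(5227 + 2368*Real.sqrt 21)) := Real.sqrt_nonneg _
  have hRlt : Real.sqrt (3*(5227 + 2368*Real.sqrt 21)) < 225 - 450*μ := by linarith
  have hX0 : (0:ℝ) ≤ 3*(5227 + 2368*Real.sqrt 21) := by positivity
  have hXsq : 3*(5227 + 2368*Real.sqrt 21) < (225 - 450*μ)^2 := by
    have h := Real.sq_sqrt hX0
    nlinarith [hRlt, hR0]
  have hW : 7104*Real.sqrt 21 < (225 - 450*μ)^2 - 15681 := by linarith
  have hQ : (1059803136:ℝ) < ((225 - 450*μ)^2 - 15681)^2 := by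
    nlinarith [hW, h21, h21nn]
  have hid : ((225 - 450*μ)^2 - 15681)^2 - 1059803136
      = 90000*(50625*s^2 - 48834*s + 1) := by rw [hs]; ring
  have hP : 0 < 50625*s^2 - 48834*s + 1 := by linarith
  have h1 : (222*d)^2 < (225*s + 1)^2 := by nlinarith [hP, hd2]
  have h2 : 222*d < 225*s + 1 := by nlinarith [h1, hd0, hs0]
  have hDpos : 0 < D := by rw [hD]; nlinarith [hd2, h2]
  have hmu2 : μ < 1/2 := by linarith
  have hslt1 : s < 1 := by rw [hs]; nlinarith
  have hd1 : d < 1 := by nlinarith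
  have hApos : 0 < A := by rw [hA]; linarith
  have hDA : D < A^2 := by
    rw [hD, hA]
    nlinarith [mul_pos (by linarith : (0:ℝ) < d) (by linarith : (0:ℝ) < 1 - d)]
  have hsD : Real.sqrt D < A := by
    have h := Real.sqrt_lt_sqrt hDpos.le hDA
    rwa [Real.sqrt_sq hApos.le] at h
  have hsD0 : 0 < Real.sqrt D := Real.sqrt_pos.mpr hDpos
  refine ⟨hApos, hDpos, hDA, ?_, ?_, ?_⟩
  · rw [hω₁]; exact Real.sqrt_pos.mpr (by linarith)
  · rw [hω₂]; exact Real.sqrt_pos.mpr (by linarith)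
  · rw [hω₁, hω₂]
    exact Real.sqrt_lt_sqrt (by linarith) (by linarith)
end

section
/- Under the Levi-Civita transformation x = Q₁²−Q₂², y = 2Q₁Q₂, together with p = (1/(2|Q|²))A₀P where A₀ = [[Q₁, −Q₂],[Q₂, Q₁]], and time rescaling dt = 4|Q|² dτ, the planar Hill four-body Hamiltonian H(q,p) = (1/2)|p|² − qᵀKp + (1/2)qᵀDq − 1/|q| on the energy level H = −C/2 transforms into the regularized Hamiltonian H̄(Q,P) = (1/2)|P|² − 2|Q|²(P₂Q₁ − Q₂P₁) + 2|Q|² QᵀM₂Q + 2C|Q|² − 4, where M₂ = A₀ᵀDA₀, which is smooth at Q = 0; i.e., 4|Q|²(H(q(Q), p(Q,P)) + C/2) = H̄(Q,P) for all Q ≠ 0. -/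
theorem levi_civita_regularization (lam1 lam2 C : ℝ) :
    ∀ Q₁ Q₂ P₁ P₂ : ℝ, (Q₁, Q₂) ≠ (0, 0) →
      let x := Q₁^2 - Q₂^2
      let y := 2*Q₁*Q₂
      let px := (Q₁*P₁ - Q₂*P₂) / (2*(Q₁^2 + Q₂^2))
      let py := (Q₂*P₁ + Q₁*P₂) / (2*(Q₁^2 + Q₂^2))
      let H := (1/2)*(px^2 + py^2) - (x*py - y*px)
                 + (1/2)*((1 - lam2)*x^2 + (1 - lam1)*y^2)
                 - 1 / Real.sqrt (x^2 + y^2)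
      let Hbar := (1/2)*(P₁^2 + P₂^2) - 2*(Q₁^2 + Q₂^2)*(P₂*Q₁ - Q₂*P₁)
                 + 2*(Q₁^2 + Q₂^2)*((1 - lam2)*(Q₁^2 - Q₂^2)^2 + (1 - lam1)*(2*Q₁*Q₂)^2)
                 + 2*C*(Q₁^2 + Q₂^2) - 4
      4*(Q₁^2 + Q₂^2)*(H + C/2) = Hbar := by
  intro Q₁ Q₂ P₁ P₂ hQ
  have hs : Q₁^2 + Q₂^2 > 0 := by
    rcases (not_and_or.mp (by simpa [Prod.ext_iff] using hQ)) with h | h <;> positivity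
  have hsqrt : Real.sqrt ((Q₁^2 - Q₂^2)^2 + (2*Q₁*Q₂)^2) = Q₁^2 + Q₂^2 := by
    rw [show (Q₁^2 - Q₂^2)^2 + (2*Q₁*Q₂)^2 = (Q₁^2 + Q₂^2)^2 by ring]
    exact Real.sqrt_sq hs.le
  simp only [hsqrt]
  field_simp
  ring
end
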